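/- arXiv:1310.1896 — 5 statements merged into one kernel-verified Lean document; each statement's English description precedes it below -/
import Mathlib

section
/- Let G be a 2-connected cubic simple graph and let γ be a 6-cycle of G that has at least one chord, such that exactly four edges e_1, e_2, e_3, e_4 of G join V(γ) to V ∖ V(γ), with pairwise distinct endpoints w_1, w_2, w_3, w_4 outside V(γ), indexed in the cyclic order induced by γ. Then in the graph obtained from G by deleting all edges of the induced subgraph G[V(γ)], there is a path joining {w_1, w_2} to {w_3, w_4}, or there is a path joining {w_2, w_3} to {w_1, w_4}. -/
/-!
Let `u₀` be the vertex of `γ` attached to `w₁`. By 2-connectivity there is a `w₁`–`w₂` walk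
avoiding `u₀`. Either it never enters `V(γ)`, so `w₁` and `w₂` are joined outside `G[V(γ)]`,
or it first enters `V(γ)` through one of the four cut edges other than `u₀w₁`, hence from some
`wᵢ` with `i ≠ 1`, which is joined to `w₁` outside `G[V(γ)]`. Each of `i = 2, 3, 4` gives one of
the two required paths.
-/

namespace SimpleGraph

variable {V : Type*} {G : SimpleGraph V}

lemma Connected.exists_walk_notMem_support_of_induce_compl {v x y : V}
    (h : (G.induce ({v}ᶜ : Set V)).Connected) (hx : x ≠ v) (hy : y ≠ v) :
    ∃ p : G.Walk x y, v ∉ p.support := by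
  obtain ⟨q⟩ := h.preconnected ⟨x, hx⟩ ⟨y, hy⟩
  -- generic endpoints, so that `rw` can abstract the coerced ones
  have hq : ∀ {x' y'} (q : (G.induce ({v}ᶜ : Set V)).Walk x' y'),
      v ∉ (q.map (Embedding.induce ({v}ᶜ : Set V)).toHom).support := by
    intro _ _ q
    rw [Walk.support_map]
    simp
  exact ⟨_, hq q⟩

lemma deleteEdges_adj_of_notMem {U : Set V} {x y : V} (h : G.Adj x y) (hx : x ∉ U) :
    (G.deleteEdges {e | ∀ z ∈ e, z ∈ U}).Adj x y :=
  deleteEdges_adj.mpr ⟨h, fun he => hx (he x (Sym2.mem_mk_left _ _))⟩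

lemma Walk.reachable_or_exists_entry (U : Set V) {x y : V} (p : G.Walk x y) (hx : x ∉ U) :
    (G.deleteEdges {e | ∀ z ∈ e, z ∈ U}).Reachable x y ∨
      ∃ v u, u ∈ p.support ∧ u ∈ U ∧ v ∉ U ∧ G.Adj v u ∧
        (G.deleteEdges {e | ∀ z ∈ e, z ∈ U}).Reachable x v := by
  induction p with
  | nil => exact .inl .rfl
  | @cons x x' y h q ih =>
    by_cases hx' : x' ∈ U
    · exact .inr ⟨x, x', by simp, hx', hx, h, .rfl⟩
    · have hstep := (deleteEdges_adj_of_notMem h hx).reachable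
      rcases ih hx' with hr | ⟨v, u, hu, huU, hvU, hvu, hr⟩
      · exact .inl (hstep.trans hr)
      · exact .inr ⟨v, u, by simp [hu], huU, hvU, hvu, hstep.trans hr⟩

end SimpleGraph

theorem stmt7_general {V : Type*}
    (G : SimpleGraph V)
    (hdel : ∀ v : V, (G.induce ({v}ᶜ : Set V)).Connected)
    (a : V) (c : G.Walk a a)
    (w : Fin 4 → V)
    (hwout : ∀ i, w i ∉ c.support)
    (k : Fin 4 → ℕ)
    (hcut : {e : Sym2 V | e ∈ G.edgeSet ∧ ∃ x y : V, e = s(x, y) ∧ x ∈ c.support ∧ y ∉ c.support}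
      = {s(c.getVert (k 0), w 0), s(c.getVert (k 1), w 1),
         s(c.getVert (k 2), w 2), s(c.getVert (k 3), w 3)}) :
    (∃ x ∈ ({w 0, w 1} : Set V), ∃ y ∈ ({w 2, w 3} : Set V),
      (G.deleteEdges {e : Sym2 V | ∀ z ∈ e, z ∈ c.support}).Reachable x y) ∨
    (∃ x ∈ ({w 1, w 2} : Set V), ∃ y ∈ ({w 0, w 3} : Set V),
      (G.deleteEdges {e : Sym2 V | ∀ z ∈ e, z ∈ c.support}).Reachable x y) := by
  have hne : ∀ i j, w i ≠ c.getVert (k j) := fun i j h =>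
    hwout i (h ▸ c.getVert_mem_support _)
  have hcutEdge : ∀ v u, u ∈ c.support → v ∉ c.support → G.Adj v u →
      ∃ i, u = c.getVert (k i) ∧ v = w i := by
    intro v u hu hv huv
    have he : s(u, v) ∈ {e : Sym2 V | e ∈ G.edgeSet ∧
        ∃ x y : V, e = s(x, y) ∧ x ∈ c.support ∧ y ∉ c.support} := ⟨huv.symm, u, v, rfl, hu, hv⟩
    rw [hcut] at he
    obtain ⟨i, hi⟩ : ∃ i, s(u, v) = s(c.getVert (k i), w i) := by
      simp only [Set.mem_insert_iff, Set.mem_singleton_iff] at he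
      rcases he with h | h | h | h
      exacts [⟨0, h⟩, ⟨1, h⟩, ⟨2, h⟩, ⟨3, h⟩]
    rcases Sym2.eq_iff.mp hi with ⟨rfl, rfl⟩ | ⟨rfl, rfl⟩
    · exact ⟨i, rfl, rfl⟩
    · exact absurd (c.getVert_mem_support _) hv
  obtain ⟨p, hp⟩ := (hdel (c.getVert (k 0))).exists_walk_notMem_support_of_induce_compl
    (hne 0 0) (hne 1 0)
  rcases p.reachable_or_exists_entry {z | z ∈ c.support} (hwout 0) with
    hr | ⟨v, u, hup, huγ, hvγ, hvu, hr⟩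
  · exact .inr ⟨w 1, .inl rfl, w 0, .inl rfl, hr.symm⟩
  obtain ⟨i, rfl, rfl⟩ := hcutEdge v u huγ hvγ hvu
  fin_cases i
  · exact absurd hup hp
  · exact .inr ⟨w 1, .inl rfl, w 0, .inl rfl, hr.symm⟩
  · exact .inl ⟨w 0, .inl rfl, w 2, .inl rfl, hr⟩
  · exact .inl ⟨w 0, .inl rfl, w 3, .inr rfl, hr⟩

/-- Lemma for Reduction 4: for a chorded 6-cycle `γ` of a 2-connected cubic graph `G`
attached to the rest of the graph by four edges with pairwise distinct outside endpoints
`w₁, w₂, w₃, w₄` (indexed in the cyclic order induced by `γ`), in the graph obtained from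
`G` by deleting all edges of `G[V(γ)]` there is a path joining `{w₁, w₂}` to `{w₃, w₄}`
or a path joining `{w₂, w₃}` to `{w₁, w₄}`. -/
theorem stmt7 {V : Type*} [Fintype V] [DecidableEq V]
    (G : SimpleGraph V) [DecidableRel G.Adj]
    (hcubic : ∀ v : V, G.degree v = 3)
    (hcard3 : 3 ≤ Fintype.card V)
    (hconn : G.Connected)
    (hdel : ∀ v : V, (G.induce ({v}ᶜ : Set V)).Connected)
    (a : V) (c : G.Walk a a) (hcyc : c.IsCycle) (hlen : c.length = 6)
    (hchord : ∃ x y : V, x ∈ c.support ∧ y ∈ c.support ∧ G.Adj x y ∧ s(x, y) ∉ c.edges)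
    (w : Fin 4 → V) (hwinj : Function.Injective w)
    (hwout : ∀ i, w i ∉ c.support)
    (k : Fin 4 → ℕ) (hk : StrictMono k) (hk6 : k 3 < 6)
    (hadj : ∀ i, G.Adj (c.getVert (k i)) (w i))
    (hcut : {e : Sym2 V | e ∈ G.edgeSet ∧ ∃ x y : V, e = s(x, y) ∧ x ∈ c.support ∧ y ∉ c.support}
      = {s(c.getVert (k 0), w 0), s(c.getVert (k 1), w 1),
         s(c.getVert (k 2), w 2), s(c.getVert (k 3), w 3)}) :
    (∃ x ∈ ({w 0, w 1} : Set V), ∃ y ∈ ({w 2, w 3} : Set V),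
      (G.deleteEdges {e : Sym2 V | ∀ z ∈ e, z ∈ c.support}).Reachable x y) ∨
    (∃ x ∈ ({w 1, w 2} : Set V), ∃ y ∈ ({w 0, w 3} : Set V),
      (G.deleteEdges {e : Sym2 V | ∀ z ∈ e, z ∈ c.support}).Reachable x y) :=
  stmt7_general G hdel a c w hwout k hcut
end

section
/- Let δ be a real number with 0 < δ ≤ 1 and set β = 1/9 − δ. Let x_1, x_2, x_3 and y_1, y_2, y_3, y_4, y_5, y_6 be nonnegative real numbers satisfying |y_1 − y_4| ≤ δ, |y_2 − y_5| ≤ δ, |y_3 − y_6| ≤ δ, and the six inequalities x_1 + y_1 + y_6 ≥ 1/3 − δ, x_2 + y_2 + y_1 ≥ 1/3 − δ, x_3 + y_3 + y_2 ≥ 1/3 − δ, x_1 + y_4 + y_3 ≥ 1/3 − δ, x_2 + y_5 + y_4 ≥ 1/3 − δ, x_3 + y_6 + y_5 ≥ 1/3 − δ. Then at least one of the following seven cases holds: (1) x_1, x_2, x_3 ≥ β; (2) x_1, y_2, y_5 ≥ β; (3) x_2, y_3, y_6 ≥ β; (4) x_3, y_1, y_4 ≥ β; (5) y_1, y_4,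 y_2, y_5 ≥ β; (6) y_2, y_5, y_3, y_6 ≥ β; (7) y_1, y_4, y_3, y_6 ≥ β. -/
/-!
Two δ-close numbers are either both at least β or both below β + δ = 1/9. If two of the pairs
(y₁, y₄), (y₂, y₅), (y₃, y₆) are large, one of the cases (5)–(7) holds. Otherwise every small pair
contributes less than 2/9 to a constraint x + y + y' ≥ 1/3 - δ, which forces the x there up to β.
-/

lemma le_and_le_or_lt_and_lt_of_abs_sub_le {a b β δ : ℝ} (h : |a - b| ≤ δ) :
    (β ≤ a ∧ β ≤ b) ∨ (a < β + δ ∧ b < β + δ) := by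
  rw [abs_le] at h
  by_cases ha : β ≤ a <;> by_cases hb : β ≤ b
  · exact Or.inl ⟨ha, hb⟩
  all_goals right; constructor <;> linarith

lemma le_of_add_add_ge {x y z β δ : ℝ} (hy : y < β + δ) (hz : z < β + δ)
    (h : 3 * β + 2 * δ ≤ x + y + z) : β ≤ x := by
  linarith

theorem stmt8_general (δ : ℝ) (β : ℝ) (hβ : β = 1 / 9 - δ)
    (x₁ x₂ x₃ y₁ y₂ y₃ y₄ y₅ y₆ : ℝ)
    (h14 : |y₁ - y₄| ≤ δ) (h25 : |y₂ - y₅| ≤ δ) (h36 : |y₃ - y₆| ≤ δ)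
    (e1 : x₁ + y₁ + y₆ ≥ 1 / 3 - δ)
    (e2 : x₂ + y₂ + y₁ ≥ 1 / 3 - δ)
    (e3 : x₃ + y₃ + y₂ ≥ 1 / 3 - δ) :
    (β ≤ x₁ ∧ β ≤ x₂ ∧ β ≤ x₃) ∨
    (β ≤ x₁ ∧ β ≤ y₂ ∧ β ≤ y₅) ∨
    (β ≤ x₂ ∧ β ≤ y₃ ∧ β ≤ y₆) ∨
    (β ≤ x₃ ∧ β ≤ y₁ ∧ β ≤ y₄) ∨
    (β ≤ y₁ ∧ β ≤ y₄ ∧ β ≤ y₂ ∧ β ≤ y₅) ∨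
    (β ≤ y₂ ∧ β ≤ y₅ ∧ β ≤ y₃ ∧ β ≤ y₆) ∨
    (β ≤ y₁ ∧ β ≤ y₄ ∧ β ≤ y₃ ∧ β ≤ y₆) := by
  have hsum : 1 / 3 - δ = 3 * β + 2 * δ := by rw [hβ]; ring
  rw [hsum] at e1 e2 e3
  have hx₁ : y₁ < β + δ → y₆ < β + δ → β ≤ x₁ := fun h h' => le_of_add_add_ge h h' e1
  have hx₂ : y₂ < β + δ → y₁ < β + δ → β ≤ x₂ := fun h h' => le_of_add_add_ge h h' e2
  have hx₃ : y₃ < β + δ → y₂ < β + δ → β ≤ x₃ := fun h h' => le_of_add_add_ge h h' e3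
  rcases le_and_le_or_lt_and_lt_of_abs_sub_le (β := β) h14 with ⟨b₁, b₄⟩ | ⟨s₁, s₄⟩ <;>
  rcases le_and_le_or_lt_and_lt_of_abs_sub_le (β := β) h25 with ⟨b₂, b₅⟩ | ⟨s₂, s₅⟩
  · exact Or.inr <| Or.inr <| Or.inr <| Or.inr <| Or.inl ⟨b₁, b₄, b₂, b₅⟩
  all_goals
    rcases le_and_le_or_lt_and_lt_of_abs_sub_le (β := β) h36 with ⟨b₃, b₆⟩ | ⟨s₃, s₆⟩
  · exact Or.inr <| Or.inr <| Or.inr <| Or.inr <| Or.inr <| Or.inr ⟨b₁, b₄, b₃, b₆⟩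
  · exact Or.inr <| Or.inr <| Or.inr <| Or.inl ⟨hx₃ s₃ s₂, b₁, b₄⟩
  · exact Or.inr <| Or.inr <| Or.inr <| Or.inr <| Or.inr <| Or.inl ⟨b₂, b₅, b₃, b₆⟩
  · exact Or.inr <| Or.inl ⟨hx₁ s₁ s₆, b₂, b₅⟩
  · exact Or.inr <| Or.inr <| Or.inl ⟨hx₂ s₂ s₁, b₃, b₆⟩
  · exact Or.inl ⟨hx₁ s₁ s₆, hx₂ s₂ s₁, hx₃ s₃ s₂⟩

/-- Technical arithmetic lemma (Lemma on cases for β) from the paper. -/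
theorem stmt8 (δ : ℝ) (hδ0 : 0 < δ) (hδ1 : δ ≤ 1) (β : ℝ) (hβ : β = 1 / 9 - δ)
    (x₁ x₂ x₃ y₁ y₂ y₃ y₄ y₅ y₆ : ℝ)
    (hx₁ : 0 ≤ x₁) (hx₂ : 0 ≤ x₂) (hx₃ : 0 ≤ x₃)
    (hy₁ : 0 ≤ y₁) (hy₂ : 0 ≤ y₂) (hy₃ : 0 ≤ y₃)
    (hy₄ : 0 ≤ y₄) (hy₅ : 0 ≤ y₅) (hy₆ : 0 ≤ y₆)
    (h14 : |y₁ - y₄| ≤ δ) (h25 : |y₂ - y₅| ≤ δ) (h36 : |y₃ - y₆| ≤ δ)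
    (e1 : x₁ + y₁ + y₆ ≥ 1 / 3 - δ)
    (e2 : x₂ + y₂ + y₁ ≥ 1 / 3 - δ)
    (e3 : x₃ + y₃ + y₂ ≥ 1 / 3 - δ)
    (e4 : x₁ + y₄ + y₃ ≥ 1 / 3 - δ)
    (e5 : x₂ + y₅ + y₄ ≥ 1 / 3 - δ)
    (e6 : x₃ + y₆ + y₅ ≥ 1 / 3 - δ) :
    (β ≤ x₁ ∧ β ≤ x₂ ∧ β ≤ x₃) ∨
    (β ≤ x₁ ∧ β ≤ y₂ ∧ β ≤ y₅) ∨
    (β ≤ x₂ ∧ β ≤ y₃ ∧ β ≤ y₆) ∨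
    (β ≤ x₃ ∧ β ≤ y₁ ∧ β ≤ y₄) ∨
    (β ≤ y₁ ∧ β ≤ y₄ ∧ β ≤ y₂ ∧ β ≤ y₅) ∨
    (β ≤ y₂ ∧ β ≤ y₅ ∧ β ≤ y₃ ∧ β ≤ y₆) ∨
    (β ≤ y₁ ∧ β ≤ y₄ ∧ β ≤ y₃ ∧ β ≤ y₆) :=
  stmt8_general δ β hβ x₁ x₂ x₃ y₁ y₂ y₃ y₄ y₅ y₆ h14 h25 h36 e1 e2 e3
end

section
/- Let G be a simple graph in which no 6-cycle has a chord, and let γ be an induced 4-cycle of G. Then no 4-cycle of G distinct from γ shares exactly one edge with γ. -/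
/-!
Suppose the 4-cycles `x y m n` (induced) and `x y u v` share only the edge `xy`. Then `u ≠ m`
and `v ≠ n`, and since `y ≁ n` and `x ≁ m` also `u ≠ n` and `v ≠ m`; so `x n m y u v` is a
6-cycle, and `xy` is a chord of it.
-/

open SimpleGraph Finset

namespace SimpleGraph

variable {V : Type*} {G : SimpleGraph V}

structure IsQuadrangle (G : SimpleGraph V) (v₀ v₁ v₂ v₃ : V) : Prop where
  adj₀₁ : G.Adj v₀ v₁
  adj₁₂ : G.Adj v₁ v₂
  adj₂₃ : G.Adj v₂ v₃
  adj₃₀ : G.Adj v₃ v₀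
  ne₀₂ : v₀ ≠ v₂
  ne₁₃ : v₁ ≠ v₃

namespace IsQuadrangle

variable {v₀ v₁ v₂ v₃ : V}

theorem rotate (h : G.IsQuadrangle v₀ v₁ v₂ v₃) : G.IsQuadrangle v₁ v₂ v₃ v₀ :=
  ⟨h.adj₁₂, h.adj₂₃, h.adj₃₀, h.adj₀₁, h.ne₁₃, h.ne₀₂.symm⟩

theorem reverse (h : G.IsQuadrangle v₀ v₁ v₂ v₃) : G.IsQuadrangle v₁ v₀ v₃ v₂ :=
  ⟨h.adj₀₁.symm, h.adj₃₀.symm, h.adj₂₃.symm, h.adj₁₂.symm, h.ne₁₃, h.ne₀₂⟩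

end IsQuadrangle

section Edges

variable [DecidableEq V]

def quadrangleEdges (v₀ v₁ v₂ v₃ : V) : Finset (Sym2 V) :=
  {s(v₀, v₁), s(v₁, v₂), s(v₂, v₃), s(v₃, v₀)}

theorem quadrangleEdges_rotate (v₀ v₁ v₂ v₃ : V) :
    quadrangleEdges v₁ v₂ v₃ v₀ = quadrangleEdges v₀ v₁ v₂ v₃ := by
  ext; simp only [quadrangleEdges, mem_insert, mem_singleton]; tauto

theorem quadrangleEdges_reverse (v₀ v₁ v₂ v₃ : V) :
    quadrangleEdges v₁ v₀ v₃ v₂ = quadrangleEdges v₀ v₁ v₂ v₃ := by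
  ext; simp only [quadrangleEdges, mem_insert, mem_singleton, Sym2.eq_swap]; tauto

theorem IsQuadrangle.exists_of_mem_quadrangleEdges {v₀ v₁ v₂ v₃ x y : V}
    (h : G.IsQuadrangle v₀ v₁ v₂ v₃) (he : s(x, y) ∈ quadrangleEdges v₀ v₁ v₂ v₃) :
    ∃ m n, G.IsQuadrangle x y m n ∧ quadrangleEdges x y m n = quadrangleEdges v₀ v₁ v₂ v₃ := by
  have h₁ := quadrangleEdges_rotate v₀ v₁ v₂ v₃
  have h₂ := (quadrangleEdges_rotate v₁ v₂ v₃ v₀).trans h₁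
  have h₃ := (quadrangleEdges_rotate v₂ v₃ v₀ v₁).trans h₂
  simp only [quadrangleEdges, mem_insert, mem_singleton, Sym2.eq_iff] at he
  rcases he with (⟨rfl, rfl⟩ | ⟨rfl, rfl⟩) | (⟨rfl, rfl⟩ | ⟨rfl, rfl⟩) | (⟨rfl, rfl⟩ | ⟨rfl, rfl⟩) |
    (⟨rfl, rfl⟩ | ⟨rfl, rfl⟩)
  · exact ⟨_, _, h, rfl⟩
  · exact ⟨_, _, h.reverse, quadrangleEdges_reverse ..⟩
  · exact ⟨_, _, h.rotate, h₁⟩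
  · exact ⟨_, _, h.rotate.reverse, (quadrangleEdges_reverse ..).trans h₁⟩
  · exact ⟨_, _, h.rotate.rotate, h₂⟩
  · exact ⟨_, _, h.rotate.rotate.reverse, (quadrangleEdges_reverse ..).trans h₂⟩
  · exact ⟨_, _, h.rotate.rotate.rotate, h₃⟩
  · exact ⟨_, _, h.rotate.rotate.rotate.reverse, (quadrangleEdges_reverse ..).trans h₃⟩

end Edges

namespace Walk

variable {a : V}

theorem eq_cons_of_length_eq_four (c : G.Walk a a) (h4 : c.length = 4) :
    ∃ (p q r : V) (h₁ : G.Adj a p) (h₂ : G.Adj p q) (h₃ : G.Adj q r) (h₄ : G.Adj r a),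
      c = .cons h₁ (.cons h₂ (.cons h₃ (.cons h₄ .nil))) := by
  match c, h4 with
  | .cons h₁ (.cons h₂ (.cons h₃ (.cons h₄ .nil))), _ => exact ⟨_, _, _, h₁, h₂, h₃, h₄, rfl⟩

theorem IsCycle.exists_isQuadrangle [DecidableEq V] {c : G.Walk a a} (hc : c.IsCycle)
    (h4 : c.length = 4) {x y : V} (he : s(x, y) ∈ c.edges) :
    ∃ m n, G.IsQuadrangle x y m n ∧ c.edges.toFinset = quadrangleEdges x y m n := by
  obtain ⟨p, q, r, h₁, h₂, h₃, h₄, rfl⟩ := c.eq_cons_of_length_eq_four h4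
  have hnd := hc.support_nodup
  simp only [support_cons, support_nil, List.tail_cons, List.nodup_cons, List.mem_cons,
    List.not_mem_nil, or_false, not_or] at hnd
  have hq : G.IsQuadrangle a p q r := ⟨h₁, h₂, h₃, h₄, fun h => hnd.2.1.2 h.symm, hnd.1.2.1⟩
  have hE : (cons h₁ (cons h₂ (cons h₃ (cons h₄ nil)))).edges.toFinset = quadrangleEdges a p q r :=
    by ext; simp [quadrangleEdges]
  rw [← List.mem_toFinset, hE] at he
  obtain ⟨m, n, hmn, hE'⟩ := hq.exists_of_mem_quadrangleEdges he
  exact ⟨m, n, hmn, hE.trans hE'.symm⟩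

theorem IsChordless.not_adj_of_isQuadrangle [DecidableEq V] {c : G.Walk a a}
    (hind : c.IsChordless) {x y m n : V} (hq : G.IsQuadrangle x y m n)
    (hE : c.edges.toFinset = quadrangleEdges x y m n) : ¬ G.Adj x m := by
  have hx : x ∈ c.support := c.fst_mem_support_of_mem_edges (u := y) <| by
    rw [← List.mem_toFinset, hE]; simp [quadrangleEdges]
  have hm : m ∈ c.support := c.fst_mem_support_of_mem_edges (u := n) <| by
    rw [← List.mem_toFinset, hE]; simp [quadrangleEdges]
  intro hxm
  have := hind.mem_edges hx hm hxm
  rw [← List.mem_toFinset, hE] at this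
  simp [quadrangleEdges, hxm.ne, hq.adj₀₁.ne, hq.adj₁₂.ne.symm, hq.adj₂₃.ne,
    hq.adj₃₀.ne.symm] at this

end Walk

theorem not_adj_of_hexagon
    (h6 : ∀ (a : V) (c : G.Walk a a), c.IsCycle → c.length = 6 → c.IsChordless)
    {v₀ v₁ v₂ v₃ v₄ v₅ : V} (hnd : [v₀, v₁, v₂, v₃, v₄, v₅].Nodup)
    (h₀₁ : G.Adj v₀ v₁) (h₁₂ : G.Adj v₁ v₂) (h₂₃ : G.Adj v₂ v₃) (h₃₄ : G.Adj v₃ v₄)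
    (h₄₅ : G.Adj v₄ v₅) (h₅₀ : G.Adj v₅ v₀) : ¬ G.Adj v₀ v₃ := by
  intro h₀₃
  let c : G.Walk v₀ v₀ :=
    .cons h₀₁ (.cons h₁₂ (.cons h₂₃ (.cons h₃₄ (.cons h₄₅ (.cons h₅₀ .nil)))))
  simp only [List.nodup_cons, List.mem_cons, List.not_mem_nil, or_false, not_or] at hnd
  have hcyc : c.IsCycle := by
    simp only [c, Walk.cons_isCycle_iff, Walk.isPath_def, Walk.support_cons, Walk.support_nil,
      Walk.edges_cons, Walk.edges_nil, List.nodup_cons, List.mem_cons, List.not_mem_nil,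
      or_false, not_or, Sym2.eq_iff]
    grind
  have := (h6 v₀ c hcyc rfl).mem_edges (by simp [c]) (by simp [c]) h₀₃
  simp only [c, Walk.edges_cons, Walk.edges_nil, List.mem_cons, List.not_mem_nil, or_false,
    Sym2.eq_iff] at this
  grind

theorem IsQuadrangle.exists_mem_quadrangleEdges_ne [DecidableEq V]
    (h6 : ∀ (a : V) (c : G.Walk a a), c.IsCycle → c.length = 6 → c.IsChordless) {x y m n u v : V}
    (hγ : G.IsQuadrangle x y m n) (hxm : ¬ G.Adj x m) (hyn : ¬ G.Adj y n)
    (hc : G.IsQuadrangle x y u v) :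
    ∃ f ∈ quadrangleEdges x y u v, f ∈ quadrangleEdges x y m n ∧ f ≠ s(x, y) := by
  by_contra! hshared
  have hum : u ≠ m := by
    rintro rfl
    have := hshared s(y, u) (by simp [quadrangleEdges]) (by simp [quadrangleEdges])
    simp [hγ.ne₀₂.symm, hγ.adj₀₁.ne.symm] at this
  have hvn : v ≠ n := by
    rintro rfl
    have := hshared s(v, x) (by simp [quadrangleEdges]) (by simp [quadrangleEdges])
    simp [hγ.ne₁₃.symm, hγ.adj₀₁.ne] at this
  have hun : u ≠ n := by rintro rfl; exact hyn hc.adj₁₂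
  have hvm : v ≠ m := by rintro rfl; exact hxm hc.adj₃₀.symm
  refine not_adj_of_hexagon h6 ?_ hγ.adj₃₀.symm hγ.adj₂₃.symm hγ.adj₁₂.symm hc.adj₁₂ hc.adj₂₃
    hc.adj₃₀ hγ.adj₀₁
  simp only [List.nodup_cons, List.mem_cons, List.not_mem_nil, or_false, not_or,
    List.nodup_nil, and_true]
  grind [hγ.adj₀₁.ne, hγ.adj₁₂.ne, hγ.adj₂₃.ne, hγ.adj₃₀.ne, hc.adj₁₂.ne, hc.adj₂₃.ne,
    hc.adj₃₀.ne, hγ.ne₀₂, hγ.ne₁₃, hc.ne₀₂, hc.ne₁₃]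

end SimpleGraph

theorem stmt10_general {V : Type*} [DecidableEq V] (G : SimpleGraph V)
    (h6 : ∀ (a : V) (c : G.Walk a a), c.IsCycle → c.length = 6 →
      ∀ x y : V, x ∈ c.support → y ∈ c.support → G.Adj x y → s(x, y) ∈ c.edges)
    (a : V) (γ : G.Walk a a) (hγ : γ.IsCycle) (hγ4 : γ.length = 4)
    (hγind : ∀ x y : V, x ∈ γ.support → y ∈ γ.support → G.Adj x y → s(x, y) ∈ γ.edges)
    (b : V) (c : G.Walk b b) (hc : c.IsCycle) (hc4 : c.length = 4) :
    (c.edges.toFinset ∩ γ.edges.toFinset).card ≠ 1 := by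
  intro hcard
  have hhex : ∀ (a : V) (c : G.Walk a a), c.IsCycle → c.length = 6 → c.IsChordless :=
    fun a c hc hl => Walk.isChordless_iff_forall_mem_edges.2 fun x y => h6 a c hc hl x y
  have hγchordless : γ.IsChordless := Walk.isChordless_iff_forall_mem_edges.2 fun x y => hγind x y
  obtain ⟨e, he⟩ := card_pos.1 (hcard ▸ Nat.one_pos)
  induction e using Sym2.ind with | h x y => ?_
  rw [mem_inter, List.mem_toFinset, List.mem_toFinset] at he
  obtain ⟨m, n, hγq, hγE⟩ := hγ.exists_isQuadrangle hγ4 he.2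
  obtain ⟨u, v, hcq, hcE⟩ := hc.exists_isQuadrangle hc4 he.1
  have hxm := hγchordless.not_adj_of_isQuadrangle hγq hγE
  have hyn := hγchordless.not_adj_of_isQuadrangle hγq.rotate
    (hγE.trans (quadrangleEdges_rotate ..).symm)
  obtain ⟨f, hfc, hfγ, hf⟩ := hγq.exists_mem_quadrangleEdges_ne hhex hxm hyn hcq
  refine hf (card_le_one.1 hcard.le f ?_ s(x, y) ?_) <;> rw [mem_inter, hcE, hγE]
  · exact ⟨hfc, hfγ⟩
  · simp [quadrangleEdges]

/-- In a graph where no 6-cycle has a chord, no 4-cycle distinct from an induced 4-cycle `γ`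
shares exactly one edge with `γ`. -/
theorem stmt10 {V : Type*} [DecidableEq V] (G : SimpleGraph V)
    (h6 : ∀ (a : V) (c : G.Walk a a), c.IsCycle → c.length = 6 →
      ∀ x y : V, x ∈ c.support → y ∈ c.support → G.Adj x y → s(x, y) ∈ c.edges)
    (a : V) (γ : G.Walk a a) (hγ : γ.IsCycle) (hγ4 : γ.length = 4)
    (hγind : ∀ x y : V, x ∈ γ.support → y ∈ γ.support → G.Adj x y → s(x, y) ∈ γ.edges)
    (b : V) (c : G.Walk b b) (hc : c.IsCycle) (hc4 : c.length = 4)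
    (hne : c.edges.toFinset ≠ γ.edges.toFinset) :
    (c.edges.toFinset ∩ γ.edges.toFinset).card ≠ 1 :=
  stmt10_general G h6 a γ hγ hγ4 hγind b c hc hc4
end

section
/- Let G be a 2-connected cubic simple graph on n vertices and let B ⊆ V(G) be the union of the vertex sets of all isolated chorded 4-cycles of G. Then |B| ≤ (6/7)·n. -/
/-!
The two vertices `a, b` of an isolated chorded 4-cycle that miss the chord each have their third
neighbour outside the cycle, and by isolation outside every chorded 4-cycle. Isolated chorded
4-cycles are pairwise disjoint, so `k` of them cover `|B| = 4k` vertices and send at least `2k`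
edges to the `n - 4k` vertices outside `B`, each of which receives at most 3. Hence
`2k ≤ 3(n - 4k)`, i.e. `|B| = 4k ≤ 6n/7`.
-/

open SimpleGraph

/-- `S` is (the vertex set of) a chorded 4-cycle of `G`: four distinct vertices inducing
a 4-cycle `a u₀ b u₁` together with exactly one chord `u₀u₁`. -/
def IsChordedFourCycle {V : Type*} (G : SimpleGraph V) (S : Set V) : Prop :=
  ∃ a b u₀ u₁ : V, S = {a, b, u₀, u₁} ∧
    a ≠ b ∧ a ≠ u₀ ∧ a ≠ u₁ ∧ b ≠ u₀ ∧ b ≠ u₁ ∧ u₀ ≠ u₁ ∧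
    G.Adj a u₀ ∧ G.Adj a u₁ ∧ G.Adj b u₀ ∧ G.Adj b u₁ ∧ G.Adj u₀ u₁ ∧ ¬ G.Adj a b

/-- A chorded 4-cycle is isolated if no edge of `G` leaving it has its other endpoint in
a chorded 4-cycle. -/
def IsIsolatedChordedFourCycle {V : Type*} (G : SimpleGraph V) (S : Set V) : Prop :=
  IsChordedFourCycle G S ∧
  ∀ x y : V, x ∈ S → y ∉ S → G.Adj x y →
    ∀ T : Set V, IsChordedFourCycle G T → y ∉ T

open Finset

namespace SimpleGraph

variable {V : Type*} {G : SimpleGraph V}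

theorem exists_adj_ne_ne_of_three_le_degree {v : V} [Fintype (G.neighborSet v)]
    (h : 3 ≤ G.degree v) (x y : V) : ∃ z, G.Adj v z ∧ z ≠ x ∧ z ≠ y := by
  classical
  have hlt : #({x, y} : Finset V) < #(G.neighborFinset v) := by
    rw [card_neighborFinset_eq_degree]
    exact card_le_two.trans_lt h
  obtain ⟨z, hz, hzxy⟩ := exists_mem_notMem_of_card_lt_card hlt
  simp only [mem_insert, mem_singleton, not_or] at hzxy
  exact ⟨z, (G.mem_neighborFinset v z).1 hz, hzxy⟩

theorem card_le_mul_card_of_forall_exists_adj [DecidableEq V] [G.LocallyFinite] {d : ℕ}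
    {A T : Finset V} (hdeg : ∀ y ∈ T, G.degree y ≤ d) (h : ∀ x ∈ A, ∃ y ∈ T, G.Adj x y) :
    #A ≤ d * #T :=
  calc #A ≤ #(T.biUnion fun y => G.neighborFinset y) := card_le_card fun x hx => by
          obtain ⟨y, hy, hxy⟩ := h x hx
          exact mem_biUnion.2 ⟨y, hy, (G.mem_neighborFinset y x).2 hxy.symm⟩
    _ ≤ ∑ y ∈ T, #(G.neighborFinset y) := card_biUnion_le
    _ ≤ ∑ _y ∈ T, d :=
        sum_le_sum fun y hy => (card_neighborFinset_eq_degree G y).trans_le (hdeg y hy)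
    _ = d * #T := by rw [sum_const, smul_eq_mul, mul_comm]

end SimpleGraph

section

variable {V : Type*} {G : SimpleGraph V}

def HasNeighborOffChordedFourCycles (G : SimpleGraph V) (x : V) : Prop :=
  ∃ y, G.Adj x y ∧ ∀ T, IsChordedFourCycle G T → y ∉ T

theorem IsChordedFourCycle.card_eq_four {s : Finset V} (h : IsChordedFourCycle G ↑s) :
    #s = 4 := by
  classical
  obtain ⟨a, b, u₀, u₁, hs, hab, ha₀, ha₁, hb₀, hb₁, hu, -⟩ := h
  exact Finset.card_eq_four.2
    ⟨a, b, u₀, u₁, hab, ha₀, ha₁, hb₀, hb₁, hu, coe_injective (by push_cast; exact hs)⟩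

theorem IsIsolatedChordedFourCycle.subset {S T : Set V} (hS : IsIsolatedChordedFourCycle G S)
    (hT : IsChordedFourCycle G T) {v : V} (hvS : v ∈ S) (hvT : v ∈ T) : T ⊆ S := by
  obtain ⟨a, b, u₀, u₁, rfl, -, -, -, -, -, -, ha₀, ha₁, hb₀, hb₁, hu, -⟩ := id hT
  -- Isolation forbids leaving `S` along an edge into `T`, and `u₀` is adjacent to all of `T`.
  have closed : ∀ x y, x ∈ S → y ∈ ({a, b, u₀, u₁} : Set V) → G.Adj x y → y ∈ S :=
    fun x y hx hy hxy => by_contra fun hyS => hS.2 x y hx hyS hxy _ hT hy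
  have hu₀ : u₀ ∈ S := by
    rcases hvT with rfl | rfl | rfl | rfl
    · exact closed _ _ hvS (by simp) ha₀
    · exact closed _ _ hvS (by simp) hb₀
    · exact hvS
    · exact closed _ _ hvS (by simp) hu.symm
  rintro y (rfl | rfl | rfl | rfl)
  · exact closed _ _ hu₀ (by simp) ha₀.symm
  · exact closed _ _ hu₀ (by simp) hb₀.symm
  · exact hu₀
  · exact closed _ _ hu₀ (by simp) hu

theorem IsIsolatedChordedFourCycle.eq_of_mem {S T : Set V} (hS : IsIsolatedChordedFourCycle G S)
    (hT : IsIsolatedChordedFourCycle G T) {v : V} (hvS : v ∈ S) (hvT : v ∈ T) : S = T :=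
  (hT.subset hS.1 hvT hvS).antisymm (hS.subset hT.1 hvS hvT)

theorem IsIsolatedChordedFourCycle.two_le_card_filter_hasNeighborOffChordedFourCycles
    [G.LocallyFinite] [DecidablePred (HasNeighborOffChordedFourCycles G)]
    {s : Finset V} (hdeg : ∀ v, 3 ≤ G.degree v) (hs : IsIsolatedChordedFourCycle G ↑s) :
    2 ≤ #(s.filter (HasNeighborOffChordedFourCycles G)) := by
  classical
  obtain ⟨a, b, u₀, u₁, hab_s, hab, -, -, -, -, -, ha₀, ha₁, hb₀, hb₁, -, hnab⟩ := hs.1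
  have corner : ∀ c c', ↑s = ({c, c', u₀, u₁} : Set V) → G.Adj c u₀ → G.Adj c u₁ →
      ¬ G.Adj c c' → c ∈ s.filter (HasNeighborOffChordedFourCycles G) := by
    intro c c' hs_eq hc₀ hc₁ hcc'
    have hc : c ∈ (s : Set V) := by rw [hs_eq]; simp
    obtain ⟨y, hcy, hy₀, hy₁⟩ := exists_adj_ne_ne_of_three_le_degree (hdeg c) u₀ u₁
    have hy : y ∉ (s : Set V) := by
      rw [hs_eq]
      rintro (rfl | rfl | rfl | rfl)
      exacts [G.irrefl hcy, hcc' hcy, hy₀ rfl, hy₁ rfl]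
    exact mem_filter.2 ⟨hc, y, hcy, hs.2 c y hc hy hcy⟩
  have hba_s : ↑s = ({b, a, u₀, u₁} : Set V) := by rw [hab_s, Set.insert_comm]
  calc 2 = #({a, b} : Finset V) := (card_pair hab).symm
    _ ≤ _ := card_le_card <| insert_subset (corner a b hab_s ha₀ ha₁ hnab) <|
        singleton_subset_iff.2 (corner b a hba_s hb₀ hb₁ fun h => hnab h.symm)

variable [Fintype V]

open Classical in
noncomputable def isolatedChordedFourCycles (G : SimpleGraph V) : Finset (Finset V) :=
  univ.filter fun s => IsIsolatedChordedFourCycle G ↑s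

theorem mem_isolatedChordedFourCycles {s : Finset V} :
    s ∈ isolatedChordedFourCycles G ↔ IsIsolatedChordedFourCycle G ↑s := by
  simp [isolatedChordedFourCycles]

theorem pairwiseDisjoint_isolatedChordedFourCycles :
    (isolatedChordedFourCycles G : Set (Finset V)).PairwiseDisjoint id :=
  fun _ hs _ ht hst => disjoint_left.2 fun _ hvs hvt => hst <| coe_injective <|
    (mem_isolatedChordedFourCycles.1 hs).eq_of_mem (mem_isolatedChordedFourCycles.1 ht) hvs hvt

variable [DecidableEq V]

theorem coe_biUnion_isolatedChordedFourCycles :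
    (((isolatedChordedFourCycles G).biUnion id : Finset V) : Set V) =
      {v | ∃ S : Set V, IsIsolatedChordedFourCycle G S ∧ v ∈ S} := by
  classical
  ext v
  simp only [coe_biUnion, Set.mem_iUnion, mem_coe, id, mem_isolatedChordedFourCycles,
    Set.mem_ofPred_eq]
  exact ⟨fun ⟨s, hs, hv⟩ => ⟨s, hs, hv⟩,
    fun ⟨S, hS, hv⟩ => ⟨S.toFinset, by simpa using hS, by simpa using hv⟩⟩

theorem card_biUnion_isolatedChordedFourCycles :
    #((isolatedChordedFourCycles G).biUnion id) = 4 * #(isolatedChordedFourCycles G) :=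
  calc _ = ∑ s ∈ isolatedChordedFourCycles G, #s :=
        card_biUnion pairwiseDisjoint_isolatedChordedFourCycles
    _ = ∑ _s ∈ isolatedChordedFourCycles G, 4 :=
        sum_congr rfl fun _ hs => (mem_isolatedChordedFourCycles.1 hs).1.card_eq_four
    _ = 4 * #(isolatedChordedFourCycles G) := by rw [sum_const, smul_eq_mul, mul_comm]

theorem two_mul_card_isolatedChordedFourCycles_le [G.LocallyFinite]
    [DecidablePred (HasNeighborOffChordedFourCycles G)] (hdeg : ∀ v, 3 ≤ G.degree v) :
    2 * #(isolatedChordedFourCycles G) ≤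
      #(((isolatedChordedFourCycles G).biUnion id).filter (HasNeighborOffChordedFourCycles G)) :=
  calc _ = ∑ _s ∈ isolatedChordedFourCycles G, 2 := by rw [sum_const, smul_eq_mul, mul_comm]
    _ ≤ ∑ s ∈ isolatedChordedFourCycles G, #(s.filter (HasNeighborOffChordedFourCycles G)) :=
        sum_le_sum fun _ hs => (mem_isolatedChordedFourCycles.1 hs)
          |>.two_le_card_filter_hasNeighborOffChordedFourCycles hdeg
    _ = _ := by
        rw [filter_biUnion, card_biUnion fun s hs t ht hst =>
          disjoint_filter_filter (pairwiseDisjoint_isolatedChordedFourCycles hs ht hst)]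
        rfl

end

theorem stmt11_general {V : Type*} [Fintype V]
    (G : SimpleGraph V) [DecidableRel G.Adj]
    (hcubic : ∀ v : V, G.degree v = 3) :
    (({v : V | ∃ S : Set V, IsIsolatedChordedFourCycle G S ∧ v ∈ S}).ncard : ℝ)
      ≤ 6 / 7 * (Fintype.card V : ℝ) := by
  classical
  have hexits : 2 * #(isolatedChordedFourCycles G) ≤
      3 * #((isolatedChordedFourCycles G).biUnion id)ᶜ := by
    refine (two_mul_card_isolatedChordedFourCycles_le fun v => (hcubic v).ge).trans <|
      card_le_mul_card_of_forall_exists_adj (fun y _ => (hcubic y).le) fun x hx => ?_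
    obtain ⟨y, hxy, hy⟩ := (mem_filter.1 hx).2
    refine ⟨y, mem_compl.2 fun hyB => ?_, hxy⟩
    obtain ⟨s, hs, hys⟩ := mem_biUnion.1 hyB
    exact hy _ (mem_isolatedChordedFourCycles.1 hs).1 hys
  rw [card_compl, card_biUnion_isolatedChordedFourCycles] at hexits
  rw [← coe_biUnion_isolatedChordedFourCycles, Set.ncard_coe_finset,
    card_biUnion_isolatedChordedFourCycles]
  have : (14 * #(isolatedChordedFourCycles G) : ℝ) ≤ 3 * Fintype.card V := by
    exact_mod_cast (by omega : 14 * #(isolatedChordedFourCycles G) ≤ _)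
  push_cast
  linarith

/-- In a 2-connected cubic graph on `n` vertices, the union `B` of the vertex sets of all
isolated chorded 4-cycles satisfies `|B| ≤ (6/7)·n`. -/
theorem stmt11 {V : Type*} [Fintype V] [DecidableEq V]
    (G : SimpleGraph V) [DecidableRel G.Adj]
    (hcubic : ∀ v : V, G.degree v = 3)
    (hcard3 : 3 ≤ Fintype.card V)
    (hconn : G.Connected)
    (hdel : ∀ v : V, (G.induce ({v}ᶜ : Set V)).Connected) :
    (({v : V | ∃ S : Set V, IsIsolatedChordedFourCycle G S ∧ v ∈ S}).ncard : ℝ)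
      ≤ 6 / 7 * (Fintype.card V : ℝ) :=
  stmt11_general G hcubic
end

section
/- Let G be a cubic simple graph, M a perfect matching of G, and C an induced cycle of G none of whose edges belongs to M. Then every path in G joining two distinct vertices of C and sharing no edge with C has length at least 3. -/
/-!
At a vertex of `C` the two cycle edges and the matching edge are all three edges of the cubic
graph, so every edge leaving `C` at a cycle vertex is a matching edge. A path of length one
between cycle vertices is a chord, impossible as `C` is induced; a path `u - w - v` of length two
would put two matching edges at `w`.
-/

namespace SimpleGraph

variable {V : Type*} {G : SimpleGraph V}

lemma Subgraph.adj_of_not_adj_of_degree_le {H₁ H₂ : G.Subgraph} {x y : V}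
    [Fintype (G.neighborSet x)]
    (hdisj : Disjoint (H₁.neighborSet x) (H₂.neighborSet x))
    (hdeg : G.degree x ≤ (H₁.neighborSet x).ncard + (H₂.neighborSet x).ncard)
    (hxy : G.Adj x y) (hny : ¬ H₁.Adj x y) : H₂.Adj x y := by
  have hsub : H₁.neighborSet x ∪ H₂.neighborSet x ⊆ G.neighborSet x :=
    Set.union_subset (H₁.neighborSet_subset x) (H₂.neighborSet_subset x)
  have hfin : (G.neighborSet x).Finite := Set.toFinite _
  have heq : H₁.neighborSet x ∪ H₂.neighborSet x = G.neighborSet x := by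
    refine Set.eq_of_subset_of_ncard_le hsub ?_ hfin
    rw [Set.ncard_union_eq hdisj (hfin.subset (H₁.neighborSet_subset x))
      (hfin.subset (H₂.neighborSet_subset x)), Set.ncard_eq_toFinset_card', Set.toFinset_card,
      card_neighborSet_eq_degree]
    exact hdeg
  have hy : y ∈ H₁.neighborSet x ∪ H₂.neighborSet x := heq ▸ hxy
  exact hy.resolve_left hny

lemma Subgraph.IsPerfectMatching.ncard_neighborSet_eq_one {M : G.Subgraph}
    (hM : M.IsPerfectMatching) (x : V) : (M.neighborSet x).ncard = 1 := by
  obtain ⟨w, hw, huniq⟩ := hM.1 (hM.2 x)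
  exact Set.ncard_eq_one.2 ⟨w, Set.eq_singleton_iff_unique_mem.2 ⟨hw, huniq⟩⟩

lemma Walk.IsCycle.adj_of_notMem_edges {M : G.Subgraph} {a x y : V} {c : G.Walk a a}
    [Fintype (G.neighborSet x)] (hc : c.IsCycle) (hM : M.IsPerfectMatching)
    (hcM : ∀ e ∈ c.edges, e ∉ M.edgeSet) (hx : x ∈ c.support) (hdeg : G.degree x = 3)
    (hxy : G.Adj x y) (hyc : s(x, y) ∉ c.edges) : M.Adj x y := by
  refine Subgraph.adj_of_not_adj_of_degree_le (H₁ := c.toSubgraph) ?_ ?_ hxy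
    (fun h => hyc (Walk.adj_toSubgraph_iff_mem_edges.1 h))
  · exact Set.disjoint_left.2 fun z hzc hzM =>
      hcM _ (Walk.adj_toSubgraph_iff_mem_edges.1 hzc) hzM
  · rw [hc.ncard_neighborSet_toSubgraph_eq_two hx, hM.ncard_neighborSet_eq_one, hdeg]

end SimpleGraph

theorem stmt12_general {V : Type*} [Fintype V]
    (G : SimpleGraph V) [DecidableRel G.Adj]
    (hcubic : ∀ v : V, G.degree v = 3)
    (M : G.Subgraph) (hM : M.IsPerfectMatching)
    (a : V) (c : G.Walk a a) (hc : c.IsCycle)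
    (hcind : ∀ x y : V, x ∈ c.support → y ∈ c.support → G.Adj x y → s(x, y) ∈ c.edges)
    (hcM : ∀ e ∈ c.edges, e ∉ M.edgeSet)
    (u v : V) (hu : u ∈ c.support) (hv : v ∈ c.support) (huv : u ≠ v)
    (p : G.Walk u v)
    (hpc : ∀ e ∈ p.edges, e ∉ c.edges) :
    3 ≤ p.length := by
  rcases p with _ | ⟨hadj₁, _ | ⟨hadj₂, _ | ⟨_, _⟩⟩⟩
  · exact absurd rfl huv
  · exact absurd (hcind u v hu hv hadj₁) (hpc _ (by simp))
  · have huw := hc.adj_of_notMem_edges hM hcM hu (hcubic u) hadj₁ (hpc _ (by simp))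
    have hvw := hc.adj_of_notMem_edges hM hcM hv (hcubic v) hadj₂.symm
      (Sym2.eq_swap ▸ hpc _ (by simp))
    exact absurd (hM.1.eq_of_adj_right huw hvw) huv
  · simp

/-- Let `G` be cubic, `M` a perfect matching, and `C` an induced cycle none of whose edges
belongs to `M`. Then every path joining two distinct vertices of `C` and sharing no edge
with `C` has length at least 3. -/
theorem stmt12 {V : Type*} [Fintype V] [DecidableEq V]
    (G : SimpleGraph V) [DecidableRel G.Adj]
    (hcubic : ∀ v : V, G.degree v = 3)
    (M : G.Subgraph) (hM : M.IsPerfectMatching)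
    (a : V) (c : G.Walk a a) (hc : c.IsCycle)
    (hcind : ∀ x y : V, x ∈ c.support → y ∈ c.support → G.Adj x y → s(x, y) ∈ c.edges)
    (hcM : ∀ e ∈ c.edges, e ∉ M.edgeSet)
    (u v : V) (hu : u ∈ c.support) (hv : v ∈ c.support) (huv : u ≠ v)
    (p : G.Walk u v) (hp : p.IsPath)
    (hpc : ∀ e ∈ p.edges, e ∉ c.edges) :
    3 ≤ p.length :=
  stmt12_general G hcubic M hM a c hc hcind hcM u v hu hv huv p hpc
end
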